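/- Fix y_0 ∈ Y. If (α_i) is a sequence in (0,1) with α_i ↑ 1 and γ_i ∈ Θ_{α_i}(y_0) are discounted occupational measures converging in the weak* sense to γ ∈ P(G), then γ ∈ W_2(y_0). -/

import Mathlib

open MeasureTheory Filter Topology Set

noncomputable section

variable {m : ℕ} {U₀ : Type*} [MetricSpace U₀] [CompactSpace U₀]
  [MeasurableSpace U₀] [BorelSpace U₀]

/-- The set `G = {(y,u) : y ∈ Y, u ∈ U y, f (y,u) ∈ Y}`. -/
def Gset (Y : Set (Fin m → ℝ)) (U : (Fin m → ℝ) → Set U₀)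
    (f : (Fin m → ℝ) × U₀ → (Fin m → ℝ)) : Set ((Fin m → ℝ) × U₀) :=
  {p | p.1 ∈ Y ∧ p.2 ∈ U p.1 ∧ f p ∈ Y}

/-- Admissible process from the initial condition `y₀`. -/
def Admissible (Y : Set (Fin m → ℝ)) (U : (Fin m → ℝ) → Set U₀)
    (f : (Fin m → ℝ) × U₀ → (Fin m → ℝ)) (y₀ : Fin m → ℝ)
    (y : ℕ → (Fin m → ℝ)) (u : ℕ → U₀) : Prop :=
  y 0 = y₀ ∧ ∀ t : ℕ, u t ∈ U (y t) ∧ y t ∈ Y ∧ y (t + 1) = f (y t, u t)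

/-- Admissible process without a prescribed initial condition. -/
def AdmissibleProc (Y : Set (Fin m → ℝ)) (U : (Fin m → ℝ) → Set U₀)
    (f : (Fin m → ℝ) × U₀ → (Fin m → ℝ))
    (y : ℕ → (Fin m → ℝ)) (u : ℕ → U₀) : Prop :=
  ∀ t : ℕ, u t ∈ U (y t) ∧ y t ∈ Y ∧ y (t + 1) = f (y t, u t)

/-- The finite-horizon value function `V_T(y₀)`. -/
def VT (Y : Set (Fin m → ℝ)) (U : (Fin m → ℝ) → Set U₀)
    (f : (Fin m → ℝ) × U₀ → (Fin m → ℝ)) (k : (Fin m → ℝ) × U₀ → ℝ)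
    (T : ℕ) (y₀ : Fin m → ℝ) : ℝ :=
  sInf {c | ∃ y u, Admissible Y U f y₀ y u ∧
    c = (∑ t ∈ Finset.range T, k (y t, u t)) / (T : ℝ)}

/-- The discounted value function `h_α(y₀)`. -/
def hdisc (Y : Set (Fin m → ℝ)) (U : (Fin m → ℝ) → Set U₀)
    (f : (Fin m → ℝ) × U₀ → (Fin m → ℝ)) (k : (Fin m → ℝ) × U₀ → ℝ)
    (α : ℝ) (y₀ : Fin m → ℝ) : ℝ :=
  (1 - α) * sInf {c | ∃ y u, Admissible Y U f y₀ y u ∧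
    c = ∑' t : ℕ, α ^ t * k (y t, u t)}

/-- The set `W` of probability measures on `G` with zero drift. -/
def Wset (Y : Set (Fin m → ℝ)) (U : (Fin m → ℝ) → Set U₀)
    (f : (Fin m → ℝ) × U₀ → (Fin m → ℝ)) :
    Set (Measure ((Fin m → ℝ) × U₀)) :=
  {γ | IsProbabilityMeasure γ ∧ γ (Gset Y U f)ᶜ = 0 ∧
    ∀ φ : (Fin m → ℝ) → ℝ, ContinuousOn φ Y →
      ∫ p, (φ (f p) - φ p.1) ∂γ = 0}

/-- The set `W₁(y₀)`. -/
def W1set (Y : Set (Fin m → ℝ)) (U : (Fin m → ℝ) → Set U₀)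
    (f : (Fin m → ℝ) × U₀ → (Fin m → ℝ)) (y₀ : Fin m → ℝ) :
    Set (Measure ((Fin m → ℝ) × U₀)) :=
  {γ | γ ∈ Wset Y U f ∧ ∃ ξ : Measure ((Fin m → ℝ) × U₀),
    IsFiniteMeasure ξ ∧ ξ (Gset Y U f)ᶜ = 0 ∧
    ∀ φ : (Fin m → ℝ) → ℝ, ContinuousOn φ Y →
      ∫ p, (φ p.1 - φ y₀) ∂γ = ∫ p, (φ (f p) - φ p.1) ∂ξ}

/-- The set `W₂(y₀)`. -/
def W2set (Y : Set (Fin m → ℝ)) (U : (Fin m → ℝ) → Set U₀)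
    (f : (Fin m → ℝ) × U₀ → (Fin m → ℝ)) (y₀ : Fin m → ℝ) :
    Set (Measure ((Fin m → ℝ) × U₀)) :=
  {γ | γ ∈ Wset Y U f ∧ ∃ ξ : ℕ → Measure ((Fin m → ℝ) × U₀),
    (∀ i, IsFiniteMeasure (ξ i) ∧ (ξ i) (Gset Y U f)ᶜ = 0) ∧
    ∀ φ : (Fin m → ℝ) → ℝ, ContinuousOn φ Y →
      Tendsto (fun i => ∫ p, (φ (f p) - φ p.1) ∂(ξ i)) atTop
        (𝓝 (∫ p, (φ p.1 - φ y₀) ∂γ))}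

/-- The optimal value `d*(y₀)` of the dual IDLP problem. -/
def dstar (Y : Set (Fin m → ℝ)) (U : (Fin m → ℝ) → Set U₀)
    (f : (Fin m → ℝ) × U₀ → (Fin m → ℝ)) (k : (Fin m → ℝ) × U₀ → ℝ)
    (y₀ : Fin m → ℝ) : ℝ :=
  sSup {μ : ℝ | ∃ ψ η : (Fin m → ℝ) → ℝ, ContinuousOn ψ Y ∧ ContinuousOn η Y ∧
    ∀ p ∈ Gset Y U f,
      0 ≤ k p + (ψ y₀ - ψ p.1) + η (f p) - η p.1 - μ ∧
      0 ≤ ψ (f p) - ψ p.1}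

/-- The optimal value `k*(y₀)` of the primal IDLP problem. -/
def kstar (Y : Set (Fin m → ℝ)) (U : (Fin m → ℝ) → Set U₀)
    (f : (Fin m → ℝ) × U₀ → (Fin m → ℝ)) (k : (Fin m → ℝ) × U₀ → ℝ)
    (y₀ : Fin m → ℝ) : ℝ :=
  sInf {c | ∃ γ ξ : Measure ((Fin m → ℝ) × U₀),
    γ ∈ Wset Y U f ∧ IsFiniteMeasure ξ ∧ ξ (Gset Y U f)ᶜ = 0 ∧
    (∀ φ : (Fin m → ℝ) → ℝ, ContinuousOn φ Y →
      ∫ p, (φ y₀ - φ p.1) ∂γ + ∫ p, (φ (f p) - φ p.1) ∂ξ = 0) ∧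
    c = ∫ p, k p ∂γ}

/-- Occupational measure of a process over `{0, …, T-1}`. -/
def occMeas (y : ℕ → (Fin m → ℝ)) (u : ℕ → U₀) (T : ℕ) :
    Measure ((Fin m → ℝ) × U₀) :=
  (T : ENNReal)⁻¹ • ∑ t ∈ Finset.range T, Measure.dirac (y t, u t)

/-- Discounted occupational measure of a process. -/
def discMeas (α : ℝ) (y : ℕ → (Fin m → ℝ)) (u : ℕ → U₀) :
    Measure ((Fin m → ℝ) × U₀) :=
  Measure.sum fun t : ℕ =>
    ENNReal.ofReal ((1 - α) * α ^ t) • Measure.dirac (y t, u t)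

/-- The set `Γ_T(y₀)` of occupational measures. -/
def GammaT (Y : Set (Fin m → ℝ)) (U : (Fin m → ℝ) → Set U₀)
    (f : (Fin m → ℝ) × U₀ → (Fin m → ℝ)) (y₀ : Fin m → ℝ) (T : ℕ) :
    Set (Measure ((Fin m → ℝ) × U₀)) :=
  {γ | ∃ y u, Admissible Y U f y₀ y u ∧ γ = occMeas y u T}

/-- The set `Θ_α(y₀)` of discounted occupational measures. -/
def Theta (Y : Set (Fin m → ℝ)) (U : (Fin m → ℝ) → Set U₀)
    (f : (Fin m → ℝ) × U₀ → (Fin m → ℝ)) (α : ℝ) (y₀ : Fin m → ℝ) :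
    Set (Measure ((Fin m → ℝ) × U₀)) :=
  {γ | ∃ y u, Admissible Y U f y₀ y u ∧ γ = discMeas α y u}

/-- Weak* convergence of a sequence of measures (tested against functions
continuous on `G`). -/
def WeakStarTendstoOn (G : Set ((Fin m → ℝ) × U₀))
    (γs : ℕ → Measure ((Fin m → ℝ) × U₀))
    (γ : Measure ((Fin m → ℝ) × U₀)) : Prop :=
  ∀ q : (Fin m → ℝ) × U₀ → ℝ, ContinuousOn q G →
    Tendsto (fun i => ∫ p, q p ∂(γs i)) atTop (𝓝 (∫ p, q p ∂γ))

/-- A `T`-periodic process. -/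
def PeriodicProc (y : ℕ → (Fin m → ℝ)) (u : ℕ → U₀) (T : ℕ) : Prop :=
  ∀ t : ℕ, y (t + T) = y t ∧ u (t + T) = u t

/-- The point `z` is finite-time reachable from `y₀`. -/
def FTReachable (Y : Set (Fin m → ℝ)) (U : (Fin m → ℝ) → Set U₀)
    (f : (Fin m → ℝ) × U₀ → (Fin m → ℝ)) (y₀ z : Fin m → ℝ) : Prop :=
  ∃ (tb : ℕ) (ty : ℕ → (Fin m → ℝ)) (tu : ℕ → U₀),
    Admissible Y U f y₀ ty tu ∧ ty tb = z

/-- The set `Γ_per(y₀)` of occupational measures of periodic processes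
finite-time reachable from `y₀`. -/
def GammaPer (Y : Set (Fin m → ℝ)) (U : (Fin m → ℝ) → Set U₀)
    (f : (Fin m → ℝ) × U₀ → (Fin m → ℝ)) (y₀ : Fin m → ℝ) :
    Set (Measure ((Fin m → ℝ) × U₀)) :=
  {γ | ∃ (T : ℕ) (y : ℕ → (Fin m → ℝ)) (u : ℕ → U₀), 1 ≤ T ∧
    AdmissibleProc Y U f y u ∧ PeriodicProc y u T ∧
    FTReachable Y U f y₀ (y 0) ∧ γ = occMeas y u T}

/-- The optimal value `V_per(y₀)` over periodic regimes. -/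
def Vper (Y : Set (Fin m → ℝ)) (U : (Fin m → ℝ) → Set U₀)
    (f : (Fin m → ℝ) × U₀ → (Fin m → ℝ)) (k : (Fin m → ℝ) × U₀ → ℝ)
    (y₀ : Fin m → ℝ) : ℝ :=
  sInf {c | ∃ (T : ℕ) (y : ℕ → (Fin m → ℝ)) (u : ℕ → U₀), 1 ≤ T ∧
    AdmissibleProc Y U f y u ∧ PeriodicProc y u T ∧
    FTReachable Y U f y₀ (y 0) ∧
    c = (∑ t ∈ Finset.range T, k (y t, u t)) / (T : ℝ)}

/-- The set `K` of continuous functions used in the alternative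
representation of the limit optimal values. -/
def Kcal (Y : Set (Fin m → ℝ)) (U : (Fin m → ℝ) → Set U₀)
    (f : (Fin m → ℝ) × U₀ → (Fin m → ℝ)) (k : (Fin m → ℝ) × U₀ → ℝ) :
    Set ((Fin m → ℝ) → ℝ) :=
  {w | ContinuousOn w Y ∧ (∀ p ∈ Gset Y U f, w p.1 ≤ w (f p)) ∧
    ∀ γ ∈ Wset Y U f, ∫ p, w p.1 ∂γ ≤ ∫ p, k p ∂γ}

/-- The optimal value `d*(θ, y₀)` of the perturbed dual problem. -/
def dstarTheta (Y : Set (Fin m → ℝ)) (U : (Fin m → ℝ) → Set U₀)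
    (f : (Fin m → ℝ) × U₀ → (Fin m → ℝ)) (k : (Fin m → ℝ) × U₀ → ℝ)
    (θ : ℝ) (y₀ : Fin m → ℝ) : ℝ :=
  sSup {μ : ℝ | ∃ ψ η : (Fin m → ℝ) → ℝ, ContinuousOn ψ Y ∧ ContinuousOn η Y ∧
    ∀ p ∈ Gset Y U f,
      0 ≤ k p + (ψ y₀ - ψ p.1) + η (f p) - η p.1 - μ ∧
      -θ ≤ ψ (f p) - ψ p.1}

/-- The optimal value `d̄*(θ, y₀)` of the perturbed dual problem in the
`ψ(y₀)` form. -/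
def dbarTheta (Y : Set (Fin m → ℝ)) (U : (Fin m → ℝ) → Set U₀)
    (f : (Fin m → ℝ) × U₀ → (Fin m → ℝ)) (k : (Fin m → ℝ) × U₀ → ℝ)
    (θ : ℝ) (y₀ : Fin m → ℝ) : ℝ :=
  sSup {c : ℝ | ∃ ψ η : (Fin m → ℝ) → ℝ, ContinuousOn ψ Y ∧ ContinuousOn η Y ∧
    (∀ p ∈ Gset Y U f,
      0 ≤ k p - ψ p.1 + η (f p) - η p.1 ∧
      -θ ≤ ψ (f p) - ψ p.1) ∧ c = ψ y₀}

/-- The optimal value `k*(θ, y₀)` of the perturbed primal problem. -/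
def kstarTheta (Y : Set (Fin m → ℝ)) (U : (Fin m → ℝ) → Set U₀)
    (f : (Fin m → ℝ) × U₀ → (Fin m → ℝ)) (k : (Fin m → ℝ) × U₀ → ℝ)
    (θ : ℝ) (y₀ : Fin m → ℝ) : ℝ :=
  sInf {c | ∃ γ ξ : Measure ((Fin m → ℝ) × U₀),
    γ ∈ Wset Y U f ∧ IsFiniteMeasure ξ ∧ ξ (Gset Y U f)ᶜ = 0 ∧
    (∀ φ : (Fin m → ℝ) → ℝ, ContinuousOn φ Y →
      ∫ p, (φ y₀ - φ p.1) ∂γ + ∫ p, (φ (f p) - φ p.1) ∂ξ = 0) ∧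
    c = ∫ p, k p ∂γ + θ * (ξ Set.univ).toReal}

/-! Summation by parts against the discount weights `(1 - α) α ^ t` shows that the discounted
occupational measure `γ_α` of an admissible process from `y₀` satisfies, for every `φ` continuous
on `Y`,
  `α ∫ (φ ∘ f - φ) dγ_α = (1 - α) ∫ (φ - φ y₀) dγ_α`.
Since `∫ (φ - φ y₀) dγ_i` converges and `(1 - α_i) / α_i → 0`, the drift of the weak* limit `γ`
vanishes and `γ ∈ W`; dividing by `1 - α_i` instead shows that the finite measures
`ξ_i = α_i / (1 - α_i) • γ_i` have drift integrals `∫ (φ - φ y₀) dγ_i`, which converge to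
`∫ (φ - φ y₀) dγ`. -/

section DiracSum

variable {X : Type*} [MeasurableSpace X]

def diracSum (c : ℕ → ℝ) (p : ℕ → X) : Measure X :=
  Measure.sum fun t => ENNReal.ofReal (c t) • Measure.dirac (p t)

variable {c : ℕ → ℝ} {p : ℕ → X}

theorem diracSum_univ (hc : ∀ t, 0 ≤ c t) (hcs : Summable c) :
    diracSum c p univ = ENNReal.ofReal (∑' t, c t) := by
  simp [diracSum, ENNReal.ofReal_tsum_of_nonneg hc hcs]

theorem isFiniteMeasure_diracSum (hc : ∀ t, 0 ≤ c t) (hcs : Summable c) :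
    IsFiniteMeasure (diracSum c p) :=
  ⟨by simp [diracSum_univ hc hcs]⟩

variable [MeasurableSingletonClass X]

theorem diracSum_compl_eq_zero {s : Set X} (hs : ∀ t, p t ∈ s) : diracSum c p sᶜ = 0 := by
  simp [diracSum, Measure.sum_apply_of_countable, Measure.dirac_apply, hs]

theorem integrable_diracSum (hc : ∀ t, 0 ≤ c t) (hcs : Summable c) {q : X → ℝ} {M : ℝ}
    (hq : ∀ t, |q (p t)| ≤ M) : Integrable q (diracSum c p) := by
  have := isFiniteMeasure_diracSum (p := p) hc hcs
  refine .of_bound ?_ M ?_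
  · simpa [diracSum] using fun t => aestronglyMeasurable_dirac.smul_measure _
  · simpa [diracSum, Measure.ae_sum_iff] using fun t =>
      Measure.ae_smul_measure (by simpa [ae_dirac_eq] using hq t) _

theorem integral_diracSum (hc : ∀ t, 0 ≤ c t) (hcs : Summable c) {q : X → ℝ} {M : ℝ}
    (hq : ∀ t, |q (p t)| ≤ M) : ∫ x, q x ∂diracSum c p = ∑' t, c t * q (p t) := by
  rw [diracSum, integral_sum_measure (integrable_diracSum hc hcs hq)]
  simp [integral_smul_measure, ENNReal.toReal_ofReal (hc _)]

end DiracSum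

theorem hasSum_discount_weights {α : ℝ} (hα0 : 0 ≤ α) (hα1 : α < 1) :
    HasSum (fun t : ℕ => (1 - α) * α ^ t) 1 := by
  simpa [mul_inv_cancel₀ (sub_pos.2 hα1).ne'] using
    (hasSum_geometric_of_lt_one hα0 hα1).mul_left (1 - α)

theorem tsum_pow_succ_mul_sub {α : ℝ} (hα0 : 0 ≤ α) (hα1 : α < 1) {a : ℕ → ℝ}
    (ha : Summable fun t => α ^ t * a t) :
    ∑' t, α ^ (t + 1) * (a (t + 1) - a t) = ∑' t, (1 - α) * α ^ t * (a t - a 0) := by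
  obtain ⟨S, hS⟩ := ha
  have hshift : HasSum (fun t => α ^ (t + 1) * a (t + 1)) (S - a 0) := by
    simpa using (hasSum_nat_add_iff' 1).2 hS
  have hleft : HasSum (fun t => α ^ (t + 1) * (a (t + 1) - a t)) ((1 - α) * S - a 0) := by
    have e : (fun t => α ^ (t + 1) * (a (t + 1) - a t))
        = fun t => α ^ (t + 1) * a (t + 1) - α * (α ^ t * a t) := by
      funext t; ring
    rw [e, show (1 - α) * S - a 0 = S - a 0 - α * S by ring]
    exact hshift.sub (hS.mul_left α)
  have hright : HasSum (fun t => (1 - α) * α ^ t * (a t - a 0)) ((1 - α) * S - a 0) := by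
    have e : (fun t => (1 - α) * α ^ t * (a t - a 0))
        = fun t => (1 - α) * (α ^ t * a t) - (1 - α) * α ^ t * a 0 := by
      funext t; ring
    rw [e]
    simpa using (hS.mul_left (1 - α)).sub ((hasSum_discount_weights hα0 hα1).mul_right (a 0))
  rw [hleft.tsum_eq, hright.tsum_eq]

section DiscountedOccupation

variable {A : Type*} {Y : Set (Fin m → ℝ)} {U : (Fin m → ℝ) → Set A}
  {f : (Fin m → ℝ) × A → Fin m → ℝ} {y : ℕ → Fin m → ℝ} {u : ℕ → A}

theorem AdmissibleProc.mem_Gset (h : AdmissibleProc Y U f y u) (t : ℕ) :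
    (y t, u t) ∈ Gset Y U f :=
  ⟨(h t).2.1, (h t).1, (h t).2.2 ▸ (h (t + 1)).2.1⟩

variable [MeasurableSpace A] {α : ℝ}

theorem discMeas_eq_diracSum :
    discMeas α y u = diracSum (fun t => (1 - α) * α ^ t) fun t => (y t, u t) :=
  rfl

theorem isProbabilityMeasure_discMeas (hα0 : 0 ≤ α) (hα1 : α < 1) :
    IsProbabilityMeasure (discMeas α y u) := by
  have hsum := hasSum_discount_weights hα0 hα1
  refine ⟨?_⟩
  rw [discMeas_eq_diracSum, diracSum_univ (fun t => by positivity) hsum.summable, hsum.tsum_eq,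
    ENNReal.ofReal_one]

variable [MeasurableSingletonClass A] {y₀ : Fin m → ℝ} {φ : (Fin m → ℝ) → ℝ} {M : ℝ}

theorem discMeas_compl_Gset_eq_zero (h : AdmissibleProc Y U f y u) :
    discMeas α y u (Gset Y U f)ᶜ = 0 :=
  diracSum_compl_eq_zero h.mem_Gset

theorem mul_integral_drift_discMeas
    (hy0 : y 0 = y₀) (hstep : ∀ t, y (t + 1) = f (y t, u t)) (hα0 : 0 ≤ α) (hα1 : α < 1)
    (hφ : ∀ t, |φ (y t)| ≤ M) :
    α * ∫ p, (φ (f p) - φ p.1) ∂discMeas α y u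
      = (1 - α) * ∫ p, (φ p.1 - φ y₀) ∂discMeas α y u := by
  have hc : ∀ t, 0 ≤ (1 - α) * α ^ t := fun t => by positivity
  have hcs := (hasSum_discount_weights hα0 hα1).summable
  have hdrift : ∀ t, |φ (f (y t, u t)) - φ (y t)| ≤ M + M := fun t =>
    (abs_sub _ _).trans (add_le_add (hstep t ▸ hφ (t + 1)) (hφ t))
  have hshift : ∀ t, |φ (y t) - φ y₀| ≤ M + M := fun t =>
    (abs_sub _ _).trans (add_le_add (hφ t) (hy0 ▸ hφ 0))
  have hweighted : Summable fun t => α ^ t * φ (y t) :=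
    .of_norm_bounded ((summable_geometric_of_lt_one hα0 hα1).mul_right M) fun t => by
      rw [norm_mul, norm_pow, Real.norm_of_nonneg hα0]
      exact mul_le_mul_of_nonneg_left (hφ t) (by positivity)
  rw [discMeas_eq_diracSum, integral_diracSum hc hcs hdrift, integral_diracSum hc hcs hshift,
    ← hy0]
  calc _ = (1 - α) * ∑' t, α ^ (t + 1) * (φ (y (t + 1)) - φ (y t)) := by
        rw [← tsum_mul_left, ← tsum_mul_left]
        congr 1 with t
        rw [hstep]
        ring
    _ = _ := by rw [tsum_pow_succ_mul_sub hα0 hα1 hweighted]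

theorem integral_drift_discMeas
    (hy0 : y 0 = y₀) (hstep : ∀ t, y (t + 1) = f (y t, u t)) (hα0 : 0 < α) (hα1 : α < 1)
    (hφ : ∀ t, |φ (y t)| ≤ M) :
    ∫ p, (φ (f p) - φ p.1) ∂discMeas α y u
      = (1 - α) / α * ∫ p, (φ p.1 - φ y₀) ∂discMeas α y u := by
  rw [div_mul_eq_mul_div, ← mul_integral_drift_discMeas hy0 hstep hα0.le hα1 hφ,
    mul_div_cancel_left₀ _ hα0.ne']

theorem integral_drift_smul_discMeas
    (hy0 : y 0 = y₀) (hstep : ∀ t, y (t + 1) = f (y t, u t)) (hα0 : 0 ≤ α) (hα1 : α < 1)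
    (hφ : ∀ t, |φ (y t)| ≤ M) :
    ∫ p, (φ (f p) - φ p.1) ∂((α / (1 - α)).toNNReal • discMeas α y u)
      = ∫ p, (φ p.1 - φ y₀) ∂discMeas α y u := by
  have h1α := sub_pos.2 hα1
  rw [integral_smul_nnreal_measure, NNReal.smul_def, Real.coe_toNNReal _ (by positivity),
    smul_eq_mul, div_mul_eq_mul_div, mul_integral_drift_discMeas hy0 hstep hα0 hα1 hφ,
    mul_div_cancel_left₀ _ h1α.ne']

end DiscountedOccupation

theorem stmt_1_general
    (Y : Set (Fin m → ℝ)) (hYcomp : IsCompact Y)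
    (U : (Fin m → ℝ) → Set U₀)
    (f : (Fin m → ℝ) × U₀ → (Fin m → ℝ)) (hf : Continuous f)
    (y₀ : Fin m → ℝ)
    (αi : ℕ → ℝ) (hαmem : ∀ i, αi i ∈ Set.Ioo (0 : ℝ) 1)
    (hαlim : Tendsto αi atTop (𝓝 1))
    (γi : ℕ → Measure ((Fin m → ℝ) × U₀))
    (hγi : ∀ i, γi i ∈ Theta Y U f (αi i) y₀)
    (γ : Measure ((Fin m → ℝ) × U₀))
    (hγP : IsProbabilityMeasure γ) (hγG : γ (Gset Y U f)ᶜ = 0)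
    (hconv : WeakStarTendstoOn (Gset Y U f) γi γ) :
    γ ∈ W2set Y U f y₀ := by
  choose y u hadm hγeq using hγi
  obtain rfl : γi = fun i => discMeas (αi i) (y i) (u i) := funext hγeq
  have hα0 i : 0 < αi i := (hαmem i).1
  have hα1 i : αi i < 1 := (hαmem i).2
  have hy0 i : y i 0 = y₀ := (hadm i).1
  have hstep i t : y i (t + 1) = f (y i t, u i t) := ((hadm i).2 t).2.2
  have hbdd (φ : (Fin m → ℝ) → ℝ) (hφ : ContinuousOn φ Y) :
      ∃ M, ∀ i t, |φ (y i t)| ≤ M := by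
    obtain ⟨M, hM⟩ := hYcomp.exists_bound_of_continuousOn hφ
    exact ⟨M, fun i t => hM _ ((hadm i).2 t).2.1⟩
  have hlim (φ : (Fin m → ℝ) → ℝ) (hφ : ContinuousOn φ Y) :=
    hconv (fun p => φ p.1 - φ y₀)
      ((hφ.comp continuousOn_fst fun _ hp => hp.1).sub continuousOn_const)
  refine ⟨⟨hγP, hγG, fun φ hφ => ?_⟩,
    fun i => (αi i / (1 - αi i)).toNNReal • discMeas (αi i) (y i) (u i),
    fun i => ⟨?_, ?_⟩, fun φ hφ => ?_⟩
  · obtain ⟨M, hM⟩ := hbdd φ hφ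
    have hfactor : Tendsto (fun i => (1 - αi i) / αi i) atTop (𝓝 ((1 - 1) / 1)) :=
      (tendsto_const_nhds.sub hαlim).div hαlim one_ne_zero
    refine tendsto_nhds_unique (hconv _ ?_) ?_
    · exact (hφ.comp hf.continuousOn fun _ hp => hp.2.2).sub
        (hφ.comp continuousOn_fst fun _ hp => hp.1)
    simpa using (hfactor.mul (hlim φ hφ)).congr fun i =>
      (integral_drift_discMeas (hy0 i) (hstep i) (hα0 i) (hα1 i) (hM i)).symm
  · have := isProbabilityMeasure_discMeas (y := y i) (u := u i) (hα0 i).le (hα1 i)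
    infer_instance
  · rw [Measure.smul_apply, discMeas_compl_Gset_eq_zero (hadm i).2, smul_zero]
  · obtain ⟨M, hM⟩ := hbdd φ hφ
    exact (hlim φ hφ).congr fun i =>
      (integral_drift_smul_discMeas (hy0 i) (hstep i) (hα0 i).le (hα1 i) (hM i)).symm

theorem stmt_1
    (Y : Set (Fin m → ℝ)) (hYne : Y.Nonempty) (hYcomp : IsCompact Y)
    (U : (Fin m → ℝ) → Set U₀)
    (hUne : ∀ y ∈ Y, (U y).Nonempty) (hUcomp : ∀ y ∈ Y, IsCompact (U y))
    (hUgraph : IsClosed {p : (Fin m → ℝ) × U₀ | p.1 ∈ Y ∧ p.2 ∈ U p.1})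
    (f : (Fin m → ℝ) × U₀ → (Fin m → ℝ)) (hf : Continuous f)
    (k : (Fin m → ℝ) × U₀ → ℝ) (hk : Continuous k)
    (hA : ∀ y ∈ Y, ∃ u ∈ U y, f (y, u) ∈ Y)
    (y₀ : Fin m → ℝ) (hy₀ : y₀ ∈ Y)
    (αi : ℕ → ℝ) (hαmem : ∀ i, αi i ∈ Set.Ioo (0 : ℝ) 1)
    (hαmono : Monotone αi) (hαlim : Tendsto αi atTop (𝓝 1))
    (γi : ℕ → Measure ((Fin m → ℝ) × U₀))
    (hγi : ∀ i, γi i ∈ Theta Y U f (αi i) y₀)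
    (γ : Measure ((Fin m → ℝ) × U₀))
    (hγP : IsProbabilityMeasure γ) (hγG : γ (Gset Y U f)ᶜ = 0)
    (hconv : WeakStarTendstoOn (Gset Y U f) γi γ) :
    γ ∈ W2set Y U f y₀ :=
  stmt_1_general Y hYcomp U f hf y₀ αi hαmem hαlim γi hγi γ hγP hγG hconv
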